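/- arXiv:1909.12215 — 2 statements merged into one kernel-verified Lean document; each statement's English description precedes it below -/
import Mathlib

section
/- Let θ = Ext(Res(α)) for a partial action α = (A_g, α_g) of a connected groupoid 𝒢 on a ring A (with fixed object x and transversal τ(x)). Then θ_g ≤ α_g for every g ∈ 𝒢, i.e. α_g extends θ_g as a partial bijection; concretely, the domain B_{g⁻¹} of θ_g is contained in A_{g⁻¹} and α_g agrees with θ_g on it, and moreover B_g = A_g ∩ (A_{τ_{t(g)}} ∩ A_{g τ_{s(g)}}) for g not an identity. -/
open CategoryTheory

universe u v

def IsIdealIn {A : Type u} [NonUnitalRing A] (S T : Set A) : Prop :=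
  S ⊆ T ∧ (0 : A) ∈ S ∧ (∀ a ∈ S, ∀ b ∈ S, a + b ∈ S) ∧ (∀ a ∈ S, -a ∈ S) ∧
    ∀ t ∈ T, ∀ s ∈ S, t * s ∈ S ∧ s * t ∈ S

structure PartialAction (G : Type v) [Groupoid G] (A : Type u) [NonUnitalRing A] where
  D : ∀ {x y : G}, (x ⟶ y) → Set A
  act : ∀ {x y : G}, (x ⟶ y) → A → A
  ideal_base : ∀ y : G, IsIdealIn (D (𝟙 y)) Set.univ
  ideal_dom : ∀ {x y : G} (g : x ⟶ y), IsIdealIn (D g) (D (𝟙 y))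
  act_mem : ∀ {x y : G} (g : x ⟶ y), ∀ a ∈ D (Groupoid.inv g), act g a ∈ D g
  act_add : ∀ {x y : G} (g : x ⟶ y), ∀ a ∈ D (Groupoid.inv g), ∀ b ∈ D (Groupoid.inv g),
    act g (a + b) = act g a + act g b
  act_mul : ∀ {x y : G} (g : x ⟶ y), ∀ a ∈ D (Groupoid.inv g), ∀ b ∈ D (Groupoid.inv g),
    act g (a * b) = act g a * act g b
  act_inj : ∀ {x y : G} (g : x ⟶ y), ∀ a ∈ D (Groupoid.inv g), ∀ b ∈ D (Groupoid.inv g),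
    act g a = act g b → a = b
  act_surj : ∀ {x y : G} (g : x ⟶ y), ∀ c ∈ D g, ∃ a ∈ D (Groupoid.inv g), act g a = c
  act_id : ∀ y : G, ∀ a ∈ D (𝟙 y), act (𝟙 y) a = a
  mem_comp : ∀ {w x y : G} (g : x ⟶ y) (h : w ⟶ x), ∀ a ∈ D (Groupoid.inv h),
    act h a ∈ D (Groupoid.inv g) ∩ D h → a ∈ D (Groupoid.inv (h ≫ g))
  act_comp : ∀ {w x y : G} (g : x ⟶ y) (h : w ⟶ x), ∀ a ∈ D (Groupoid.inv h),
    act h a ∈ D (Groupoid.inv g) ∩ D h → act g (act h a) = act (h ≫ g) a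

def IsId {G : Type v} [Groupoid G] {y z : G} (g : y ⟶ z) : Prop :=
  ∃ h : y = z, g = eqToHom h

section Helpers

variable {G : Type v} [Groupoid G] {A : Type u} [NonUnitalRing A] (α : PartialAction G A)

lemma pa_inv_act {x y : G} (g : x ⟶ y) (a : A) (ha : a ∈ α.D (Groupoid.inv g)) :
    α.act (Groupoid.inv g) (α.act g a) = a := by
  have hmem : α.act g a ∈ α.D (Groupoid.inv (Groupoid.inv g)) ∩ α.D g := by
    have : Groupoid.inv (Groupoid.inv g) = g := by simp [Groupoid.inv_eq_inv]
    rw [this]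
    exact ⟨α.act_mem g a ha, α.act_mem g a ha⟩
  have h1 := α.act_comp (Groupoid.inv g) g a ha hmem
  rw [h1]
  have h2 : g ≫ Groupoid.inv g = 𝟙 x := Groupoid.comp_inv g
  rw [h2]
  exact α.act_id x a ((α.ideal_dom (Groupoid.inv g)).1 ha)

lemma pa_key_sub {w x y : G} (g : x ⟶ y) (h : w ⟶ x) (a : A)
    (ha : a ∈ α.D (Groupoid.inv g) ∩ α.D h) :
    α.act g a ∈ α.D g ∩ α.D (h ≫ g) := by
  obtain ⟨b, hb, rfl⟩ := α.act_surj h a ha.2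
  have hmem : α.act h b ∈ α.D (Groupoid.inv g) ∩ α.D h := ha
  refine ⟨α.act_mem g _ ha.1, ?_⟩
  have hc := α.act_comp g h b hb hmem
  rw [hc]
  have hbm : b ∈ α.D (Groupoid.inv (h ≫ g)) := α.mem_comp g h b hb hmem
  exact α.act_mem (h ≫ g) b hbm

lemma pa_key {w x y : G} (g : x ⟶ y) (h : w ⟶ x) :
    α.act g '' (α.D (Groupoid.inv g) ∩ α.D h) = α.D g ∩ α.D (h ≫ g) := by
  ext c
  constructor
  · rintro ⟨a, ha, rfl⟩
    exact pa_key_sub α g h a ha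
  · rintro ⟨hc1, hc2⟩
    obtain ⟨a, ha, rfl⟩ := α.act_surj g c hc1
    refine ⟨a, ⟨ha, ?_⟩, rfl⟩
    have hinv : Groupoid.inv (Groupoid.inv g) = g := by simp [Groupoid.inv_eq_inv]
    have := pa_key_sub α (Groupoid.inv g) (h ≫ g) (α.act g a)
      ⟨by rw [hinv]; exact hc1, hc2⟩
    rw [pa_inv_act α g a ha] at this
    have harr : (h ≫ g) ≫ Groupoid.inv g = h := by
      simp [Category.assoc, Groupoid.comp_inv]
    rw [harr] at this
    exact this.2

lemma pa_img_inter {x y : G} (g : x ⟶ y) (S T : Set A) :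
    α.act g '' (α.D (Groupoid.inv g) ∩ (S ∩ T)) =
      α.act g '' (α.D (Groupoid.inv g) ∩ S) ∩ α.act g '' (α.D (Groupoid.inv g) ∩ T) := by
  ext c
  constructor
  · rintro ⟨a, ⟨ha, hS, hT⟩, rfl⟩
    exact ⟨⟨a, ⟨ha, hS⟩, rfl⟩, ⟨a, ⟨ha, hT⟩, rfl⟩⟩
  · rintro ⟨⟨a, ⟨ha, hS⟩, hac⟩, ⟨b, ⟨hb, hT⟩, hbc⟩⟩
    have hab : a = b := α.act_inj g a ha b hb (hac.trans hbc.symm)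
    exact ⟨a, ⟨ha, hS, hab ▸ hT⟩, hac⟩

end Helpers

/-!
STATEMENT 8: Let α be a partial action of a connected groupoid 𝒢 on A, x an object and
τ(x) a transversal, and let θ = Ext(Res(α)): for non-identity g : y ⟶ z (with
g_x = τ_y ≫ g ≫ τ_z⁻¹), θ_g is the composite partial bijection
α_{τ_z} ∘ α_{g_x} ∘ α_{τ_y}⁻¹, whose range is
B_g = α_{τ_z}(A_{τ_z⁻¹} ∩ α_{g_x}(A_{τ_y⁻¹} ∩ A_{g_x⁻¹}));
for identities θ_{id_y} = id_{A_y}.  Then θ_g ≤ α_g: the domain B_{g⁻¹} of θ_g is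
contained in A_{g⁻¹} and α_g agrees there with the composite, and moreover
B_g = A_g ∩ (A_{τ_z} ∩ A_{g τ_y}).
-/
theorem extension_partial_actions_stmt8
    {G : Type v} [Groupoid G] {A : Type u} [NonUnitalRing A]
    (hconn : ∀ a b : G, Nonempty (a ⟶ b))
    (x : G) (τ : ∀ y : G, x ⟶ y) (hτx : τ x = 𝟙 x)
    (α : PartialAction G A) {y z : G} (g : y ⟶ z) (hg : ¬ IsId g) :
    (α.act (τ z) '' (α.D (Groupoid.inv (τ z)) ∩
        α.act (τ y ≫ g ≫ Groupoid.inv (τ z)) ''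
          (α.D (Groupoid.inv (τ y)) ∩ α.D (Groupoid.inv (τ y ≫ g ≫ Groupoid.inv (τ z)))))
      = α.D g ∩ (α.D (τ z) ∩ α.D (τ y ≫ g))) ∧
    (∀ a ∈ α.act (τ y) '' (α.D (Groupoid.inv (τ y)) ∩
        α.act (τ z ≫ Groupoid.inv g ≫ Groupoid.inv (τ y)) ''
          (α.D (Groupoid.inv (τ z)) ∩
            α.D (Groupoid.inv (τ z ≫ Groupoid.inv g ≫ Groupoid.inv (τ y))))),
      a ∈ α.D (Groupoid.inv g) ∧
      α.act g a = α.act (τ z)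
        (α.act (τ y ≫ g ≫ Groupoid.inv (τ z)) (α.act (Groupoid.inv (τ y)) a))) := by
  clear hconn hτx hg
  set gx : x ⟶ x := τ y ≫ g ≫ Groupoid.inv (τ z) with hgx
  set hx : x ⟶ x := τ z ≫ Groupoid.inv g ≫ Groupoid.inv (τ y) with hhx
  have hinvgx : Groupoid.inv gx = hx := by
    simp [hgx, hhx, Groupoid.inv_eq_inv]
  have hinvhx : Groupoid.inv hx = gx := by
    rw [← hinvgx]; simp [Groupoid.inv_eq_inv]
  constructor
  · -- first part
    have inner : α.act gx '' (α.D (Groupoid.inv (τ y)) ∩ α.D (Groupoid.inv gx))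
        = α.D gx ∩ α.D (g ≫ Groupoid.inv (τ z)) := by
      rw [Set.inter_comm, pa_key]
      have : Groupoid.inv (τ y) ≫ gx = g ≫ Groupoid.inv (τ z) := by
        simp [hgx]
      rw [this]
    rw [inner, pa_img_inter, pa_key, pa_key]
    have h1 : gx ≫ τ z = τ y ≫ g := by
      simp [hgx, Category.assoc, Groupoid.inv_comp]
    have h2 : (g ≫ Groupoid.inv (τ z)) ≫ τ z = g := by
      simp [Category.assoc, Groupoid.inv_comp]
    rw [h1, h2]
    ext a
    constructor
    · rintro ⟨⟨hz, hyg⟩, hz', hgg⟩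
      exact ⟨hgg, hz, hyg⟩
    · rintro ⟨hgg, hz, hyg⟩
      exact ⟨⟨hz, hyg⟩, hz, hgg⟩
  · -- second part
    rintro a ⟨b, ⟨hb1, hb2⟩, rfl⟩
    obtain ⟨c, ⟨hc1, hc2⟩, rfl⟩ := hb2
    -- hc2 : c ∈ α.D (Groupoid.inv hx) = α.D gx
    have hc2' : c ∈ α.D gx := by rwa [hinvhx] at hc2
    -- b ∈ D hx = D (inv gx)
    have hbhx : α.act hx c ∈ α.D (Groupoid.inv gx) := by
      rw [hinvgx]
      exact α.act_mem hx c hc2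
    -- act gx (act hx c) = c
    have hgxb : α.act gx (α.act hx c) = c := by
      have := pa_inv_act α (Groupoid.inv gx) c (by rwa [show Groupoid.inv (Groupoid.inv gx)
        = gx by simp [Groupoid.inv_eq_inv]])
      rw [show Groupoid.inv (Groupoid.inv gx) = gx by simp [Groupoid.inv_eq_inv],
        hinvgx] at this
      exact this
    -- a := act (τ y) b where b = act hx c
    set b := α.act hx c with hbdef
    -- a ∈ D (τ y)
    have haty : α.act (τ y) b ∈ α.D (τ y) := α.act_mem (τ y) b hb1
    -- b ∈ D (inv g ≫ inv (τ y)) : from key_sub with hx and inv (τ z)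
    have hbkey := pa_key_sub α hx (Groupoid.inv (τ z)) c ⟨by rwa [hinvhx], hc1⟩
    have harr1 : Groupoid.inv (τ z) ≫ hx = Groupoid.inv g ≫ Groupoid.inv (τ y) := by
      simp [hhx, Groupoid.inv_comp]
    rw [harr1] at hbkey
    -- a ∈ D (inv g)
    have hakey := pa_key_sub α (τ y) (Groupoid.inv g ≫ Groupoid.inv (τ y)) b
      ⟨hb1, hbkey.2⟩
    have harr2 : (Groupoid.inv g ≫ Groupoid.inv (τ y)) ≫ τ y = Groupoid.inv g := by
      simp [Category.assoc, Groupoid.inv_comp]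
    rw [harr2] at hakey
    refine ⟨hakey.2, ?_⟩
    -- act (inv τ y) a = b
    have hinvb : α.act (Groupoid.inv (τ y)) (α.act (τ y) b) = b :=
      pa_inv_act α (τ y) b hb1
    rw [hinvb, hgxb]
    -- act g a = act (τ y ≫ g) b
    have hcomp1 := α.act_comp g (τ y) b hb1 ⟨hakey.2, haty⟩
    -- act (τ z) c = act (gx ≫ τ z) b
    have hcomp2 := α.act_comp (τ z) gx b hbhx (by rw [hgxb]; exact ⟨hc1, hc2'⟩)
    rw [hgxb] at hcomp2
    rw [hcomp1, hcomp2]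
    congr 1
    simp [hgx, Category.assoc, Groupoid.inv_comp]
end

section
/- Let α = (A_g, α_g) be a group-type partial action of a connected groupoid 𝒢 on a ring A, i.e. there exist an object x and a transversal τ(x) with A_{τ_y⁻¹} = A_x and A_{τ_y} = A_y for all objects y. Then Ext(Res(α)) = α; in particular every group-type partial action is recoverable from its restriction data (the family {A_y}, the isomorphisms α_{τ_y}, and the partial action of the isotropy group 𝒢(x) on A_x). -/
open CategoryTheory

universe u v

section Aux

variable {G : Type v} [Groupoid G] {A : Type u} [NonUnitalRing A] (α : PartialAction G A)

lemma PartialAction.ginv_inv {y z : G} (g : y ⟶ z) :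
    Groupoid.inv (Groupoid.inv g) = g := by simp

lemma PartialAction.D_sub_id {y z : G} (g : y ⟶ z) : α.D g ⊆ α.D (𝟙 z) :=
  (α.ideal_dom g).1

lemma PartialAction.act_inv_act {y z : G} (g : y ⟶ z) (a : A)
    (ha : a ∈ α.D (Groupoid.inv g)) :
    α.act (Groupoid.inv g) (α.act g a) = a := by
  have hm := α.act_mem g a ha
  have h1 : α.act g a ∈ α.D (Groupoid.inv (Groupoid.inv g)) ∩ α.D g :=
    ⟨by rw [PartialAction.ginv_inv]; exact hm, hm⟩
  have h2 := α.act_comp (Groupoid.inv g) g a ha h1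
  rw [h2, Groupoid.comp_inv, α.act_id]
  exact (α.ideal_dom (Groupoid.inv g)).1 ha

lemma PartialAction.act_act_inv {y z : G} (g : y ⟶ z) (a : A)
    (ha : a ∈ α.D g) :
    α.act g (α.act (Groupoid.inv g) a) = a := by
  have ha' : a ∈ α.D (Groupoid.inv (Groupoid.inv g)) := by
    rw [PartialAction.ginv_inv]; exact ha
  have := α.act_inv_act (Groupoid.inv g) a ha'
  rwa [PartialAction.ginv_inv] at this

variable (x : G) (τ : ∀ y : G, x ⟶ y)
  (hgt1 : ∀ y : G, α.D (Groupoid.inv (τ y)) = α.D (𝟙 x))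
  (hgt2 : ∀ y : G, α.D (τ y) = α.D (𝟙 y))

include hgt1 hgt2 in
lemma PartialAction.gt_forward {y z : G} (g : y ⟶ z) (a : A)
    (ha : a ∈ α.D (Groupoid.inv g)) :
    α.act (Groupoid.inv (τ y)) a ∈ α.D (Groupoid.inv (τ y ≫ g ≫ Groupoid.inv (τ z))) ∧
    α.act (τ z) (α.act (τ y ≫ g ≫ Groupoid.inv (τ z)) (α.act (Groupoid.inv (τ y)) a))
      = α.act g a := by
  have hτa : a ∈ α.D (τ y) := by
    rw [hgt2]; exact (α.ideal_dom (Groupoid.inv g)).1 ha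
  have hτa' : a ∈ α.D (Groupoid.inv (Groupoid.inv (τ y))) := by
    rw [PartialAction.ginv_inv]; exact hτa
  set b := α.act (Groupoid.inv (τ y)) a with hbdef
  have hb : b ∈ α.D (Groupoid.inv (τ y)) := α.act_mem (Groupoid.inv (τ y)) a hτa'
  have hτb : α.act (τ y) b = a := α.act_act_inv (τ y) a hτa
  have hga : α.act g a ∈ α.D g := α.act_mem g a ha
  have hga' : α.act g a ∈ α.D (τ z) := by
    rw [hgt2]; exact (α.ideal_dom g).1 hga
  have hga'' : α.act g a ∈ α.D (Groupoid.inv (Groupoid.inv (τ z))) := by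
    rw [PartialAction.ginv_inv]; exact hga'
  set c := α.act (Groupoid.inv (τ z)) (α.act g a) with hcdef
  have hc : c ∈ α.D (Groupoid.inv (τ z)) := α.act_mem (Groupoid.inv (τ z)) _ hga''
  have hτc : α.act (τ z) c = α.act g a := α.act_act_inv (τ z) _ hga'
  -- Fact 1: a ∈ D (inv k), k = g ≫ inv τ z
  have hmem : α.act (τ z) c ∈ α.D (Groupoid.inv (Groupoid.inv g)) ∩ α.D (τ z) := by
    rw [hτc, PartialAction.ginv_inv]; exact ⟨hga, hga'⟩
  have hcm : c ∈ α.D (Groupoid.inv (τ z ≫ Groupoid.inv g)) :=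
    α.mem_comp (Groupoid.inv g) (τ z) c hc hmem
  have hac : α.act (Groupoid.inv g) (α.act (τ z) c) = α.act (τ z ≫ Groupoid.inv g) c :=
    α.act_comp (Groupoid.inv g) (τ z) c hc hmem
  have e1 : τ z ≫ Groupoid.inv g = Groupoid.inv (g ≫ Groupoid.inv (τ z)) := by simp
  rw [e1] at hcm hac
  rw [hτc, α.act_inv_act g a ha] at hac
  have hck : c ∈ α.D (g ≫ Groupoid.inv (τ z)) := by
    rw [PartialAction.ginv_inv] at hcm; exact hcm
  have hak : a ∈ α.D (Groupoid.inv (g ≫ Groupoid.inv (τ z))) := by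
    rw [hac]; exact α.act_mem (Groupoid.inv (g ≫ Groupoid.inv (τ z))) c hcm
  have hka : α.act (g ≫ Groupoid.inv (τ z)) a = c := by
    conv_lhs => rw [hac]
    exact α.act_act_inv (g ≫ Groupoid.inv (τ z)) c hck
  -- Step 2
  have hmem2 : α.act (τ y) b ∈ α.D (Groupoid.inv (g ≫ Groupoid.inv (τ z))) ∩ α.D (τ y) := by
    rw [hτb]; exact ⟨hak, hτa⟩
  have hbm : b ∈ α.D (Groupoid.inv (τ y ≫ g ≫ Groupoid.inv (τ z))) :=
    α.mem_comp (g ≫ Groupoid.inv (τ z)) (τ y) b hb hmem2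
  have hbc : α.act (g ≫ Groupoid.inv (τ z)) (α.act (τ y) b)
      = α.act (τ y ≫ g ≫ Groupoid.inv (τ z)) b :=
    α.act_comp (g ≫ Groupoid.inv (τ z)) (τ y) b hb hmem2
  rw [hτb, hka] at hbc
  refine ⟨hbm, ?_⟩
  rw [← hbc, hτc]

include hgt1 hgt2 in
lemma PartialAction.gt_backward {y z : G} (g : y ⟶ z) (b : A)
    (hb1 : b ∈ α.D (Groupoid.inv (τ y)))
    (hb2 : b ∈ α.D (Groupoid.inv (τ y ≫ g ≫ Groupoid.inv (τ z)))) :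
    α.act (τ y) b ∈ α.D (Groupoid.inv g) ∧
    α.act (τ z) (α.act (τ y ≫ g ≫ Groupoid.inv (τ z)) b)
      = α.act g (α.act (τ y) b) := by
  set gx := τ y ≫ g ≫ Groupoid.inv (τ z) with hgxdef
  have hc : α.act gx b ∈ α.D gx := α.act_mem gx b hb2
  have hc1 : α.act gx b ∈ α.D (Groupoid.inv (τ z)) := by
    rw [hgt1]; exact (α.ideal_dom gx).1 hc
  have hmem1 : α.act gx b ∈ α.D (Groupoid.inv (τ z)) ∩ α.D gx := ⟨hc1, hc⟩
  have hbm : b ∈ α.D (Groupoid.inv (gx ≫ τ z)) := α.mem_comp (τ z) gx b hb2 hmem1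
  have hbc : α.act (τ z) (α.act gx b) = α.act (gx ≫ τ z) b :=
    α.act_comp (τ z) gx b hb2 hmem1
  set a := α.act (τ y) b with hadef
  have ha : a ∈ α.D (τ y) := α.act_mem (τ y) b hb1
  have ha' : a ∈ α.D (Groupoid.inv (Groupoid.inv (τ y))) := by
    rw [PartialAction.ginv_inv]; exact ha
  have hinva : α.act (Groupoid.inv (τ y)) a = b := α.act_inv_act (τ y) b hb1
  have hmem2 : α.act (Groupoid.inv (τ y)) a ∈ α.D (Groupoid.inv (gx ≫ τ z)) ∩
      α.D (Groupoid.inv (τ y)) := by rw [hinva]; exact ⟨hbm, hb1⟩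
  have ham : a ∈ α.D (Groupoid.inv (Groupoid.inv (τ y) ≫ gx ≫ τ z)) :=
    α.mem_comp (gx ≫ τ z) (Groupoid.inv (τ y)) a ha' hmem2
  have hac : α.act (gx ≫ τ z) (α.act (Groupoid.inv (τ y)) a)
      = α.act (Groupoid.inv (τ y) ≫ gx ≫ τ z) a :=
    α.act_comp (gx ≫ τ z) (Groupoid.inv (τ y)) a ha' hmem2
  have e2 : Groupoid.inv (τ y) ≫ gx ≫ τ z = g := by
    rw [hgxdef]; simp
  rw [e2] at ham hac
  rw [hinva] at hac
  exact ⟨ham, by rw [hbc, hac]⟩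

end Aux

/-!
STATEMENT 10: If α is a group-type partial action of the connected groupoid 𝒢 on A,
i.e. there are an object x and a transversal τ(x) with A_{τ_y⁻¹} = A_x and A_{τ_y} = A_y
for all y, then Ext(Res(α)) = α: for every non-identity g : y ⟶ z (g_x = τ_y ≫ g ≫ τ_z⁻¹),
the range B_g = α_{τ_z}(A_{τ_z⁻¹} ∩ α_{g_x}(A_{τ_y⁻¹} ∩ A_{g_x⁻¹})) of the composite
partial bijection α_{τ_z} ∘ α_{g_x} ∘ α_{τ_y}⁻¹ equals A_g, and the composite agrees
with α_g on the whole of A_{g⁻¹} (for identities Ext(Res(α)) coincides with α by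
definition), so every group-type partial action is recoverable from its restriction data.
-/
theorem extension_partial_actions_stmt10
    {G : Type v} [Groupoid G] {A : Type u} [NonUnitalRing A]
    (hconn : ∀ a b : G, Nonempty (a ⟶ b))
    (x : G) (τ : ∀ y : G, x ⟶ y) (hτx : τ x = 𝟙 x)
    (α : PartialAction G A)
    (hgt1 : ∀ y : G, α.D (Groupoid.inv (τ y)) = α.D (𝟙 x))
    (hgt2 : ∀ y : G, α.D (τ y) = α.D (𝟙 y)) :
    ∀ {y z : G} (g : y ⟶ z), ¬ IsId g →
      (α.act (τ z) '' (α.D (Groupoid.inv (τ z)) ∩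
          α.act (τ y ≫ g ≫ Groupoid.inv (τ z)) ''
            (α.D (Groupoid.inv (τ y)) ∩
              α.D (Groupoid.inv (τ y ≫ g ≫ Groupoid.inv (τ z)))))
        = α.D g) ∧
      ∀ a ∈ α.D (Groupoid.inv g),
        α.act (τ z) (α.act (τ y ≫ g ≫ Groupoid.inv (τ z)) (α.act (Groupoid.inv (τ y)) a))
          = α.act g a := by
  intro y z g _
  constructor
  · ext w
    constructor
    · rintro ⟨u, ⟨-, v, ⟨hv1, hv2⟩, rfl⟩, rfl⟩
      obtain ⟨hmem, heq⟩ := α.gt_backward x τ hgt1 hgt2 g v hv1 hv2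
      rw [heq]
      exact α.act_mem g _ hmem
    · intro hw
      obtain ⟨a, ha, rfl⟩ := α.act_surj g w hw
      obtain ⟨hbm, heq⟩ := α.gt_forward x τ hgt1 hgt2 g a ha
      have hτa : a ∈ α.D (Groupoid.inv (Groupoid.inv (τ y))) := by
        rw [PartialAction.ginv_inv, hgt2]
        exact (α.ideal_dom (Groupoid.inv g)).1 ha
      have hb : α.act (Groupoid.inv (τ y)) a ∈ α.D (Groupoid.inv (τ y)) :=
        α.act_mem (Groupoid.inv (τ y)) a hτa
      refine ⟨α.act (τ y ≫ g ≫ Groupoid.inv (τ z)) (α.act (Groupoid.inv (τ y)) a),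
        ⟨?_, ⟨α.act (Groupoid.inv (τ y)) a, ⟨hb, hbm⟩, rfl⟩⟩, heq⟩
      rw [hgt1]
      exact (α.ideal_dom _).1 (α.act_mem (τ y ≫ g ≫ Groupoid.inv (τ z)) _ hbm)
  · intro a ha
    exact (α.gt_forward x τ hgt1 hgt2 g a ha).2
end
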